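/- Let μ be a Borel probability measure on the closed unit disc D = {z ∈ ℂ : |z| ≤ 1} such that μ({ζ}) = 0 for every ζ ∈ ℂ with |ζ| = 1. Then there exists a ∈ ℂ with |a| < 1 such that ∫_D (z − a)/(1 − conj(a)·z) dμ(z) = 0. -/

import Mathlib

/-!
Consider the energy `E(a) = ∫ log |1 - ā z|² dν(z) - log (1 - |a|²)` on the open unit disc.
It is continuous, and it tends to `+∞` at the circle: since `ν` has no atoms there, uniformly
small caps around the boundary points carry mass at most `1/4`, so for `a` near `ζ = a / |a|`
the integral is at least `(1/2) log (1 - |a|) - O(1)`, while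
`-log (1 - |a|²) ≥ -log (1 - |a|) - log 2`. Hence `E` has an interior minimum `a`. With
`J = ∫ (z - a) / (1 - ā z) dν`, the inequality `log x ≤ x - 1` bounds `E (a + t J) - E a` above
by `t φ(t)` with `φ` continuous and `φ(0) = -2 |J|² / (1 - |a|²)`; minimality forces
`φ(0) ≥ 0`, so `J = 0`. Finite measures reduce to probability measures by normalization.
-/

open MeasureTheory Metric Filter Topology ComplexConjugate
open Complex (normSq)

section Pointwise

variable {a z : ℂ}

lemma normSq_lt_one_of_norm_lt_one (ha : ‖a‖ < 1) : normSq a < 1 := by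
  rw [Complex.normSq_eq_norm_sq]
  exact pow_lt_one₀ (norm_nonneg a) ha two_ne_zero

lemma one_sub_norm_le_norm_one_sub_conj_mul (hz : ‖z‖ ≤ 1) : 1 - ‖a‖ ≤ ‖1 - conj a * z‖ := by
  have hmul : ‖conj a * z‖ ≤ ‖a‖ := by
    rw [norm_mul, RCLike.norm_conj]
    exact mul_le_of_le_one_right (norm_nonneg a) hz
  calc 1 - ‖a‖ ≤ ‖(1 : ℂ)‖ - ‖conj a * z‖ := by rw [norm_one]; linarith
    _ ≤ ‖1 - conj a * z‖ := norm_sub_norm_le _ _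

lemma norm_one_sub_conj_mul_le (ha : ‖a‖ ≤ 1) (hz : ‖z‖ ≤ 1) : ‖1 - conj a * z‖ ≤ 2 := by
  calc ‖1 - conj a * z‖ ≤ ‖(1 : ℂ)‖ + ‖conj a * z‖ := norm_sub_le _ _
    _ ≤ 1 + 1 := by
      rw [norm_one, norm_mul, RCLike.norm_conj]
      gcongr
      exact mul_le_one₀ ha (norm_nonneg z) hz
    _ = 2 := by norm_num

lemma one_sub_conj_mul_ne_zero (ha : ‖a‖ < 1) (hz : ‖z‖ ≤ 1) : 1 - conj a * z ≠ 0 := by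
  rw [← norm_pos_iff]
  linarith [one_sub_norm_le_norm_one_sub_conj_mul (a := a) hz]

lemma norm_div_one_sub_conj_mul_le (ha : ‖a‖ < 1) (hz : ‖z‖ ≤ 1) :
    ‖z / (1 - conj a * z)‖ ≤ 1 / (1 - ‖a‖) := by
  rw [norm_div]
  exact div_le_div₀ zero_le_one hz (by linarith) (one_sub_norm_le_norm_one_sub_conj_mul hz)

lemma abs_log_normSq_one_sub_conj_mul_le {r : ℝ} (ha : ‖a‖ ≤ r) (hr : r < 1) (hz : ‖z‖ ≤ 1) :
    |Real.log (normSq (1 - conj a * z))| ≤ Real.log 4 - 2 * Real.log (1 - r) := by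
  have hlow : Real.log (1 - r) ≤ Real.log ‖1 - conj a * z‖ :=
    Real.log_le_log (by linarith) (by linarith [one_sub_norm_le_norm_one_sub_conj_mul (a := a) hz])
  have hup : Real.log ‖1 - conj a * z‖ ≤ Real.log 2 :=
    Real.log_le_log (by linarith [one_sub_norm_le_norm_one_sub_conj_mul (a := a) hz])
      (norm_one_sub_conj_mul_le (by linarith) hz)
  have hr0 : Real.log (1 - r) ≤ 0 := Real.log_nonpos (by linarith) (by linarith [norm_nonneg a])
  have h4 : Real.log 4 = 2 * Real.log 2 := by
    rw [show (4 : ℝ) = 2 ^ 2 by norm_num, Real.log_pow, Nat.cast_ofNat]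
  have h2 : 0 ≤ Real.log 2 := Real.log_nonneg one_le_two
  rw [Complex.normSq_eq_norm_sq, Real.log_pow, Nat.cast_ofNat, abs_le]
  constructor <;> linarith

lemma norm_sub_sub_norm_sub_le_norm_one_sub_conj_mul {ζ : ℂ} (hζ : ‖ζ‖ = 1) (hz : ‖z‖ ≤ 1) :
    ‖ζ - z‖ - ‖ζ - a‖ ≤ ‖1 - conj a * z‖ := by
  have hsplit : conj ζ * (ζ - z) = (1 - conj a * z) - conj (ζ - a) * z := by
    have : conj ζ * ζ = 1 := by rw [Complex.conj_mul', hζ]; norm_num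
    rw [map_sub]
    linear_combination this
  have hcap : ‖conj (ζ - a) * z‖ ≤ ‖ζ - a‖ := by
    rw [norm_mul, RCLike.norm_conj]
    exact mul_le_of_le_one_right (norm_nonneg _) hz
  have : ‖ζ - z‖ ≤ ‖1 - conj a * z‖ + ‖conj (ζ - a) * z‖ := by
    calc ‖ζ - z‖ = ‖conj ζ * (ζ - z)‖ := by rw [norm_mul, RCLike.norm_conj, hζ, one_mul]
      _ ≤ _ := by rw [hsplit]; exact norm_sub_le _ _
  linarith

lemma mobius_eq_mul_div_sub (hw : 1 - conj a * z ≠ 0) :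
    (z - a) / (1 - conj a * z) = (1 - normSq a) * (z / (1 - conj a * z)) - a := by
  rw [Complex.normSq_eq_conj_mul_self, eq_sub_iff_add_eq, mul_div_assoc', div_add' _ _ _ hw,
    div_left_inj' hw]
  ring

lemma log_normSq_sub_mul_sub_log_normSq_le {w u : ℂ} (t : ℝ) (hw : w ≠ 0) (hwt : w - t * u ≠ 0) :
    Real.log (normSq (w - t * u)) - Real.log (normSq w)
      ≤ -2 * t * (u / w).re + t ^ 2 * normSq (u / w) := by
  have hquot : normSq (w - t * u) / normSq w = 1 - 2 * t * (u / w).re + t ^ 2 * normSq (u / w) := by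
    rw [← Complex.normSq_div, sub_div, div_self hw, mul_div_assoc, Complex.normSq_sub,
      Complex.normSq_mul, Complex.normSq_ofReal, one_mul, map_one]
    simp only [map_mul, Complex.conj_ofReal, Complex.re_ofReal_mul, Complex.conj_re]
    ring
  have hpos := div_pos (Complex.normSq_pos.2 hwt) (Complex.normSq_pos.2 hw)
  rw [← Real.log_div (Complex.normSq_pos.2 hwt).ne' (Complex.normSq_pos.2 hw).ne']
  linarith [Real.log_le_sub_one_of_pos hpos]

end Pointwise

lemma IsCompact.exists_pos_forall_measure_ball_lt {X : Type*} [MetricSpace X] [MeasurableSpace X]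
    [OpensMeasurableSpace X] {ν : Measure X} [IsFiniteMeasure ν] {K : Set X} (hK : IsCompact K)
    (hatom : ∀ x ∈ K, ν {x} = 0) {ε : ENNReal} (hε : 0 < ε) :
    ∃ δ > 0, ∀ x ∈ K, ν (ball x δ) < ε := by
  have hcover : K ⊆ ⋃₀ {U | IsOpen U ∧ ν U < ε} := by
    intro x hx
    have hlim : Tendsto (fun r => ν (ball x r)) (𝓝[>] 0) (𝓝 0) := by
      simpa only [thickening_singleton, hatom x hx] using
        tendsto_measure_thickening_of_isClosed (s := {x})
          ⟨1, one_pos, MeasureTheory.measure_ne_top ν _⟩ isClosed_singleton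
    obtain ⟨r, hr, hνr⟩ :=
      ((tendsto_order.1 hlim).2 ε hε).and self_mem_nhdsWithin |>.exists
    exact ⟨ball x r, ⟨isOpen_ball, hr⟩, mem_ball_self hνr⟩
  obtain ⟨δ, hδ, hball⟩ := lebesgue_number_lemma_of_metric_sUnion hK (fun U hU => hU.1) hcover
  refine ⟨δ, hδ, fun x hx => ?_⟩
  obtain ⟨U, ⟨_, hνU⟩, hxU⟩ := hball x hx
  exact (measure_mono hxU).trans_lt hνU

/-- `-∫ log P_a dν` for the Poisson kernel `P_a z = (1 - ‖a‖²) / ‖1 - conj a * z‖²`. -/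
noncomputable def poissonEnergy (ν : Measure ℂ) (a : ℂ) : ℝ :=
  ∫ z, Real.log (normSq (1 - conj a * z)) ∂ν - Real.log (1 - normSq a)

section Energy

variable {ν : Measure ℂ} {a : ℂ}

lemma integrable_log_normSq_one_sub_conj_mul [IsFiniteMeasure ν] (hν : ∀ᵐ z ∂ν, ‖z‖ ≤ 1)
    (ha : ‖a‖ < 1) : Integrable (fun z => Real.log (normSq (1 - conj a * z))) ν := by
  refine Integrable.mono' (integrable_const (Real.log 4 - 2 * Real.log (1 - ‖a‖)))
    (by fun_prop : Measurable _).aestronglyMeasurable ?_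
  filter_upwards [hν] with z hz
  exact abs_log_normSq_one_sub_conj_mul_le le_rfl ha hz

lemma integrable_div_one_sub_conj_mul [IsFiniteMeasure ν] (hν : ∀ᵐ z ∂ν, ‖z‖ ≤ 1)
    (ha : ‖a‖ < 1) : Integrable (fun z => z / (1 - conj a * z)) ν := by
  refine Integrable.mono' (integrable_const (1 / (1 - ‖a‖)))
    (by fun_prop : Measurable _).aestronglyMeasurable ?_
  filter_upwards [hν] with z hz
  exact norm_div_one_sub_conj_mul_le ha hz

lemma continuousOn_poissonEnergy [IsFiniteMeasure ν] (hν : ∀ᵐ z ∂ν, ‖z‖ ≤ 1) {r : ℝ}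
    (hr : r < 1) : ContinuousOn (poissonEnergy ν) (closedBall 0 r) := by
  have hnorm : ∀ b ∈ closedBall (0 : ℂ) r, ‖b‖ ≤ r := fun b hb => by
    rwa [mem_closedBall, dist_zero_right] at hb
  have hintegral : ContinuousOn (fun b => ∫ z, Real.log (normSq (1 - conj b * z)) ∂ν)
      (closedBall 0 r) := by
    refine continuousOn_of_dominated (bound := fun _ => Real.log 4 - 2 * Real.log (1 - r))
      (fun b _ => (by fun_prop : Measurable _).aestronglyMeasurable) (fun b hb => ?_)
      (integrable_const _) ?_
    · filter_upwards [hν] with z hz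
      exact abs_log_normSq_one_sub_conj_mul_le (hnorm b hb) hr hz
    · filter_upwards [hν] with z hz
      refine ContinuousOn.log (by fun_prop) fun b hb => ?_
      exact (Complex.normSq_pos.2 (one_sub_conj_mul_ne_zero ((hnorm b hb).trans_lt hr) hz)).ne'
  refine hintegral.sub (ContinuousOn.log (by fun_prop) fun b hb => ?_)
  linarith [normSq_lt_one_of_norm_lt_one ((hnorm b hb).trans_lt hr)]

lemma log_sq_half_add_indicator_le_log_normSq {z ζ : ℂ} {δ : ℝ} (hζ : ‖ζ‖ = 1) (hδ : 0 < δ)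
    (hδ2 : δ ≤ 2) (ha : ‖a‖ < 1) (hζa : ‖ζ - a‖ ≤ δ / 2) (hz : ‖z‖ ≤ 1) :
    Real.log ((δ / 2) ^ 2) + (ball ζ δ).indicator (fun _ => 2 * Real.log (1 - ‖a‖)) z
      ≤ Real.log (normSq (1 - conj a * z)) := by
  have hw := one_sub_norm_le_norm_one_sub_conj_mul (a := a) hz
  have hδlog : Real.log ((δ / 2) ^ 2) ≤ 0 := Real.log_nonpos (by positivity) (by nlinarith)
  rw [Complex.normSq_eq_norm_sq]
  by_cases hzζ : z ∈ ball ζ δ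
  · have hlog : 2 * Real.log (1 - ‖a‖) = Real.log ((1 - ‖a‖) ^ 2) := by
      rw [Real.log_pow]; norm_num
    have : Real.log ((1 - ‖a‖) ^ 2) ≤ Real.log (‖1 - conj a * z‖ ^ 2) :=
      Real.log_le_log (by nlinarith) (pow_le_pow_left₀ (by linarith) hw 2)
    rw [Set.indicator_of_mem hzζ, hlog]
    linarith
  · have hfar : δ ≤ ‖ζ - z‖ := by
      rw [mem_ball, dist_comm, dist_eq_norm, not_lt] at hzζ
      exact hzζ
    have := norm_sub_sub_norm_sub_le_norm_one_sub_conj_mul (a := a) hζ hz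
    rw [Set.indicator_of_notMem hzζ, add_zero]
    exact Real.log_le_log (by positivity) (pow_le_pow_left₀ (by positivity) (by linarith) 2)

lemma le_integral_log_normSq_one_sub_conj_mul [IsProbabilityMeasure ν]
    (hν : ∀ᵐ z ∂ν, ‖z‖ ≤ 1) {ζ : ℂ} {δ : ℝ} (hζ : ‖ζ‖ = 1) (hδ : 0 < δ) (hδ2 : δ ≤ 2)
    (ha : ‖a‖ < 1) (hζa : ‖ζ - a‖ ≤ δ / 2) (hcap : ν.real (ball ζ δ) ≤ 1 / 4) :
    Real.log ((δ / 2) ^ 2) + Real.log (1 - ‖a‖) / 2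
      ≤ ∫ z, Real.log (normSq (1 - conj a * z)) ∂ν := by
  have hL : Real.log (1 - ‖a‖) ≤ 0 :=
    Real.log_nonpos (by linarith) (by linarith [norm_nonneg a])
  have hindicator : Integrable ((ball ζ δ).indicator fun _ => 2 * Real.log (1 - ‖a‖)) ν :=
    (integrable_const _).indicator measurableSet_ball
  calc Real.log ((δ / 2) ^ 2) + Real.log (1 - ‖a‖) / 2
      ≤ Real.log ((δ / 2) ^ 2) + ν.real (ball ζ δ) * (2 * Real.log (1 - ‖a‖)) := by
        nlinarith [measureReal_nonneg (μ := ν) (s := ball ζ δ)]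
    _ = ∫ z, (Real.log ((δ / 2) ^ 2)
          + (ball ζ δ).indicator (fun _ => 2 * Real.log (1 - ‖a‖)) z) ∂ν := by
        rw [integral_add (integrable_const _) hindicator, integral_const,
          integral_indicator_const _ measurableSet_ball, probReal_univ, one_smul, smul_eq_mul]
    _ ≤ _ := by
        refine integral_mono_ae ((integrable_const _).add hindicator)
          (integrable_log_normSq_one_sub_conj_mul hν ha) ?_
        filter_upwards [hν] with z hz
        exact log_sq_half_add_indicator_le_log_normSq hζ hδ hδ2 ha hζa hz

lemma exists_forall_poissonEnergy_pos [IsProbabilityMeasure ν] (hν : ∀ᵐ z ∂ν, ‖z‖ ≤ 1)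
    (hatom : ∀ ζ : ℂ, ‖ζ‖ = 1 → ν {ζ} = 0) :
    ∃ r, 0 ≤ r ∧ r < 1 ∧ ∀ a : ℂ, r < ‖a‖ → ‖a‖ < 1 → 0 < poissonEnergy ν a := by
  obtain ⟨δ₀, hδ₀, hcap₀⟩ := (isCompact_sphere (0 : ℂ) 1).exists_pos_forall_measure_ball_lt
    (fun ζ hζ => hatom ζ (by simpa using hζ)) (by norm_num : (0 : ENNReal) < 1 / 4)
  set δ := min δ₀ 1
  have hδ : 0 < δ := lt_min hδ₀ one_pos
  have hδ1 : δ ≤ 1 := min_le_right _ _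
  -- once `1 - ‖a‖ < η`, the lower bound `log (δ/2)² - log 2 - log (1 - ‖a‖) / 2` is positive
  set η := Real.exp (2 * (Real.log ((δ / 2) ^ 2) - Real.log 2))
  have hη : 0 < η := Real.exp_pos _
  refine ⟨1 - min (δ / 2) η, by linarith [min_le_left (δ / 2) η], by simp [hδ, hη],
    fun a hra ha => ?_⟩
  have hna : 0 < ‖a‖ := by linarith [min_le_left (δ / 2) η]
  set ζ : ℂ := (‖a‖⁻¹ : ℂ) * a
  have hζ : ‖ζ‖ = 1 := by simp [ζ, hna.ne']
  have hζa : ‖ζ - a‖ = 1 - ‖a‖ := by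
    rw [show ζ - a = ((‖a‖⁻¹ - 1 : ℝ) : ℂ) * a by push_cast; ring, norm_mul, Complex.norm_real,
      Real.norm_eq_abs, abs_of_nonneg (sub_nonneg.2 ((one_le_inv₀ hna).2 ha.le)), sub_mul,
      inv_mul_cancel₀ hna.ne', one_mul]
  have hcap : ν.real (ball ζ δ) ≤ 1 / 4 := by
    have := (measure_mono (μ := ν) (ball_subset_ball (min_le_left δ₀ 1))).trans_lt
      (hcap₀ ζ (by simpa using hζ))
    have := ENNReal.toReal_mono (by norm_num) this.le
    rwa [ENNReal.toReal_div, ENNReal.toReal_one, ENNReal.toReal_ofNat] at this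
  have hintegral := le_integral_log_normSq_one_sub_conj_mul hν hζ hδ (by linarith) ha
    (by rw [hζa]; linarith [min_le_left (δ / 2) η]) hcap
  have hL : Real.log (1 - ‖a‖) < 2 * (Real.log ((δ / 2) ^ 2) - Real.log 2) := by
    rw [Real.log_lt_iff_lt_exp (by linarith)]
    linarith [min_le_right (δ / 2) η]
  have hlog : Real.log (1 - normSq a) ≤ Real.log 2 + Real.log (1 - ‖a‖) := by
    rw [← Real.log_mul two_ne_zero (by linarith), Complex.normSq_eq_norm_sq]
    exact Real.log_le_log (by nlinarith) (by nlinarith)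
  unfold poissonEnergy
  linarith

lemma exists_isMinOn_poissonEnergy [IsProbabilityMeasure ν] (hν : ∀ᵐ z ∂ν, ‖z‖ ≤ 1)
    (hatom : ∀ ζ : ℂ, ‖ζ‖ = 1 → ν {ζ} = 0) :
    ∃ a : ℂ, ‖a‖ < 1 ∧ IsMinOn (poissonEnergy ν) (ball 0 1) a := by
  obtain ⟨r, hr0, hr1, hpos⟩ := exists_forall_poissonEnergy_pos hν hatom
  obtain ⟨a, ha, hmin⟩ := (isCompact_closedBall (0 : ℂ) r).exists_isMinOn
    ⟨0, mem_closedBall_self hr0⟩ (continuousOn_poissonEnergy hν hr1)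
  rw [mem_closedBall_zero_iff] at ha
  refine ⟨a, ha.trans_lt hr1, isMinOn_iff.2 fun b hb => ?_⟩
  rw [mem_ball_zero_iff] at hb
  rcases le_or_gt ‖b‖ r with hbr | hbr
  · exact hmin (mem_closedBall_zero_iff.2 hbr)
  · have hzero : poissonEnergy ν 0 = 0 := by simp [poissonEnergy]
    exact (hmin (mem_closedBall_self hr0)).trans (hzero.trans_lt (hpos b hbr hb)).le

lemma poissonEnergy_add_mul_sub_le [IsProbabilityMeasure ν] (hν : ∀ᵐ z ∂ν, ‖z‖ ≤ 1)
    (ha : ‖a‖ < 1) {v : ℂ} {t : ℝ} (hat : ‖a + t * v‖ < 1) :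
    poissonEnergy ν (a + t * v) - poissonEnergy ν a
      ≤ -2 * t * (conj v * ∫ z, z / (1 - conj a * z) ∂ν).re + t ^ 2 * (normSq v / (1 - ‖a‖) ^ 2)
        + (normSq (a + t * v) - normSq a) / (1 - normSq (a + t * v)) := by
  have hpointwise : ∀ᵐ z ∂ν, Real.log (normSq (1 - conj (a + t * v) * z))
      - Real.log (normSq (1 - conj a * z))
        ≤ -2 * t * (conj v * (z / (1 - conj a * z))).re + t ^ 2 * (normSq v / (1 - ‖a‖) ^ 2) := by
    filter_upwards [hν] with z hz
    have hsplit : 1 - conj (a + t * v) * z = (1 - conj a * z) - t * (conj v * z) := by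
      simp only [map_add, map_mul, Complex.conj_ofReal]
      ring
    have hquot : normSq (conj v * z / (1 - conj a * z)) ≤ normSq v / (1 - ‖a‖) ^ 2 := by
      rw [mul_div_assoc, Complex.normSq_mul, Complex.normSq_conj, Complex.normSq_eq_norm_sq (_ / _),
        div_eq_mul_one_div _ ((1 - ‖a‖) ^ 2), ← one_div_pow]
      gcongr
      · exact Complex.normSq_nonneg v
      · exact norm_div_one_sub_conj_mul_le ha hz
    have := log_normSq_sub_mul_sub_log_normSq_le (u := conj v * z) t
      (one_sub_conj_mul_ne_zero ha hz) (hsplit ▸ one_sub_conj_mul_ne_zero hat hz)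
    rw [hsplit, ← mul_div_assoc]
    linarith [mul_le_mul_of_nonneg_left hquot (sq_nonneg t)]
  have hI := integrable_div_one_sub_conj_mul hν ha
  have hintegral : ∫ z, Real.log (normSq (1 - conj (a + t * v) * z)) ∂ν
      - ∫ z, Real.log (normSq (1 - conj a * z)) ∂ν
        ≤ -2 * t * (conj v * ∫ z, z / (1 - conj a * z) ∂ν).re
          + t ^ 2 * (normSq v / (1 - ‖a‖) ^ 2) := by
    rw [← integral_sub (integrable_log_normSq_one_sub_conj_mul hν hat)
      (integrable_log_normSq_one_sub_conj_mul hν ha)]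
    have hre : ∫ z, (conj v * (z / (1 - conj a * z))).re ∂ν
        = (conj v * ∫ z, z / (1 - conj a * z) ∂ν).re := by
      rw [← integral_const_mul]
      exact integral_re (hI.const_mul _)
    have hlin : Integrable (fun z => -2 * t * (conj v * (z / (1 - conj a * z))).re) ν :=
      ((hI.const_mul (conj v)).re).const_mul _
    refine (integral_mono_ae ((integrable_log_normSq_one_sub_conj_mul hν hat).sub
      (integrable_log_normSq_one_sub_conj_mul hν ha)) (hlin.add (integrable_const _))
      hpointwise).trans_eq ?_
    simp only [Pi.add_apply]
    rw [integral_add hlin (integrable_const _), integral_const_mul, hre, integral_const,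
      probReal_univ, one_smul]
  have hpos₀ := normSq_lt_one_of_norm_lt_one ha
  have hpos₁ := normSq_lt_one_of_norm_lt_one hat
  have hlog : Real.log (1 - normSq a) - Real.log (1 - normSq (a + t * v))
      ≤ (normSq (a + t * v) - normSq a) / (1 - normSq (a + t * v)) := by
    rw [← Real.log_div (by linarith) (by linarith)]
    calc _ ≤ (1 - normSq a) / (1 - normSq (a + t * v)) - 1 :=
          Real.log_le_sub_one_of_pos (div_pos (by linarith) (by linarith))
      _ = _ := by rw [div_sub_one (by linarith)]; ring
  unfold poissonEnergy
  linarith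

lemma integral_mobius_eq_mul_sub [IsProbabilityMeasure ν] (hν : ∀ᵐ z ∂ν, ‖z‖ ≤ 1)
    (ha : ‖a‖ < 1) :
    ∫ z, (z - a) / (1 - conj a * z) ∂ν = (1 - normSq a) * ∫ z, z / (1 - conj a * z) ∂ν - a := by
  rw [integral_congr_ae
      (hν.mono fun z hz => mobius_eq_mul_div_sub (one_sub_conj_mul_ne_zero ha hz)),
    integral_sub ((integrable_div_one_sub_conj_mul hν ha).const_mul _) (integrable_const a),
    integral_const_mul, integral_const, probReal_univ, one_smul]

lemma integral_mobius_eq_zero_of_isLocalMin [IsProbabilityMeasure ν] (hν : ∀ᵐ z ∂ν, ‖z‖ ≤ 1)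
    (ha : ‖a‖ < 1) (hmin : IsLocalMin (poissonEnergy ν) a) :
    ∫ z, (z - a) / (1 - conj a * z) ∂ν = 0 := by
  set I := ∫ z, z / (1 - conj a * z) ∂ν
  set J := ∫ z, (z - a) / (1 - conj a * z) ∂ν
  have hJ : J = (1 - normSq a) * I - a := integral_mobius_eq_mul_sub hν ha
  have hna := normSq_lt_one_of_norm_lt_one ha
  set φ : ℝ → ℝ := fun t => -2 * (conj J * I).re + t * (normSq J / (1 - ‖a‖) ^ 2)
    + (2 * (a * conj J).re + t * normSq J) / (1 - normSq (a + t * J))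
  have hφ : ContinuousAt φ 0 := by
    refine ContinuousAt.add (by fun_prop) (ContinuousAt.div (by fun_prop) (by fun_prop) ?_)
    simp only [Complex.ofReal_zero, zero_mul, add_zero]
    linarith
  have hline : Tendsto (fun t : ℝ => a + t * J) (𝓝 0) (𝓝 a) :=
    (by fun_prop : Continuous fun t : ℝ => a + t * J).tendsto' 0 a (by simp)
  have hφnonneg : ∀ᶠ t in 𝓝[>] 0, 0 ≤ φ t := by
    have hnear := hline.eventually (hmin.and (isOpen_ball.mem_nhds (mem_ball_zero_iff.2 ha)))
    filter_upwards [nhdsWithin_le_nhds hnear, self_mem_nhdsWithin] with t ⟨hle, hat⟩ ht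
    have hdiff := poissonEnergy_add_mul_sub_le hν ha (mem_ball_zero_iff.1 hat)
    have hsq : normSq (a + t * J) - normSq a = t * (2 * (a * conj J).re + t * normSq J) := by
      rw [Complex.normSq_add, Complex.normSq_mul, Complex.normSq_ofReal, map_mul,
        Complex.conj_ofReal, mul_left_comm, Complex.re_ofReal_mul]
      ring
    have : t * φ t = -2 * t * (conj J * I).re + t ^ 2 * (normSq J / (1 - ‖a‖) ^ 2)
        + (normSq (a + t * J) - normSq a) / (1 - normSq (a + t * J)) := by
      rw [hsq]; simp only [φ]; ring
    exact nonneg_of_mul_nonneg_right (by linarith) ht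
  have hφ0 : 0 ≤ φ 0 := ge_of_tendsto (hφ.tendsto.mono_left nhdsWithin_le_nhds) hφnonneg
  have hre : (1 - normSq a) * (conj J * I).re = normSq J + (a * conj J).re := by
    have : conj J * ((1 - normSq a : ℝ) * I) = conj J * J + a * conj J := by
      push_cast
      linear_combination (-conj J) * hJ
    have := congrArg Complex.re this
    rwa [mul_left_comm, Complex.re_ofReal_mul, Complex.add_re,
      ← Complex.normSq_eq_conj_mul_self, Complex.ofReal_re] at this
  have : (1 - normSq a) * φ 0 = -2 * normSq J := by
    simp only [φ, Complex.ofReal_zero, zero_mul, add_zero]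
    rw [mul_add, mul_div_cancel₀ _ (by linarith : 1 - normSq a ≠ 0)]
    linarith
  have hJ0 : normSq J ≤ 0 := by nlinarith
  exact Complex.normSq_eq_zero.1 (le_antisymm hJ0 (Complex.normSq_nonneg J))

theorem exists_integral_mobius_eq_zero_of_isProbabilityMeasure [IsProbabilityMeasure ν]
    (hν : ∀ᵐ z ∂ν, ‖z‖ ≤ 1) (hatom : ∀ ζ : ℂ, ‖ζ‖ = 1 → ν {ζ} = 0) :
    ∃ a : ℂ, ‖a‖ < 1 ∧ ∫ z, (z - a) / (1 - conj a * z) ∂ν = 0 := by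
  obtain ⟨a, ha, hmin⟩ := exists_isMinOn_poissonEnergy hν hatom
  exact ⟨a, ha, integral_mobius_eq_zero_of_isLocalMin hν ha
    (hmin.isLocalMin (isOpen_ball.mem_nhds (mem_ball_zero_iff.2 ha)))⟩

theorem exists_integral_mobius_eq_zero [IsFiniteMeasure ν]
    (hν : ∀ᵐ z ∂ν, ‖z‖ ≤ 1) (hatom : ∀ ζ : ℂ, ‖ζ‖ = 1 → ν {ζ} = 0) :
    ∃ a : ℂ, ‖a‖ < 1 ∧ ∫ z, (z - a) / (1 - conj a * z) ∂ν = 0 := by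
  rcases eq_zero_or_neZero ν with rfl | hν₀
  · exact ⟨0, by simp, by simp⟩
  obtain ⟨a, ha, hbalance⟩ := exists_integral_mobius_eq_zero_of_isProbabilityMeasure
    (ν := (ν Set.univ)⁻¹ • ν) (Measure.ae_smul_measure hν _)
    (fun ζ hζ => by simp [hatom ζ hζ])
  refine ⟨a, ha, ?_⟩
  rw [integral_smul_measure] at hbalance
  refine (smul_eq_zero.1 hbalance).resolve_left ?_
  simp [ENNReal.toReal_eq_zero_iff, measure_ne_top, NeZero.ne]

end Energy

theorem stmt_3_general (μ : Measure ℂ) [IsProbabilityMeasure μ]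
    (hatom : ∀ ζ : ℂ, ‖ζ‖ = 1 → μ {ζ} = 0) :
    ∃ a : ℂ, ‖a‖ < 1 ∧
      ∫ z in Metric.closedBall (0 : ℂ) 1,
        (z - a) / (1 - (starRingEnd ℂ) a * z) ∂μ = 0 :=
  exists_integral_mobius_eq_zero
    ((ae_restrict_mem measurableSet_closedBall).mono fun _ hz => mem_closedBall_zero_iff.1 hz)
    fun ζ hζ => Measure.restrict_le_self.absolutelyContinuous (hatom ζ hζ)

/-- Center-of-gravity balancing lemma (Szegő 1954, Hersch 1970): for a Borel
probability measure on the closed unit disc assigning zero mass to every point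
of the boundary circle, some Möbius automorphism of the disc balances the
center of gravity at the origin. -/
theorem stmt_3 (μ : Measure ℂ) [IsProbabilityMeasure μ]
    (hsupp : μ (Metric.closedBall (0 : ℂ) 1) = 1)
    (hatom : ∀ ζ : ℂ, ‖ζ‖ = 1 → μ {ζ} = 0) :
    ∃ a : ℂ, ‖a‖ < 1 ∧
      ∫ z in Metric.closedBall (0 : ℂ) 1,
        (z - a) / (1 - (starRingEnd ℂ) a * z) ∂μ = 0 :=
  stmt_3_general μ hatom
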